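/- Let d ≥ n ≥ k ≥ 1, let φ₁,…,φ_n be orthonormal vectors in ℂ^d, and let |Φ_n⟩ := |φ₁⟩∧⋯∧|φ_n⟩ be the corresponding Slater determinant state. Then the quantum entropy of the reduced state of k particles equals H(tr_{n→k}[|Φ_n⟩⟨Φ_n|]) = log C(n,k). -/

import Mathlib

open scoped BigOperators Matrix Kronecker ComplexOrder
open Matrix

noncomputable section

variable {ι : Type*} [Fintype ι] [DecidableEq ι]

/-- Apply a real-scalar function to a Hermitian matrix via the spectral decomposition
(junk value `0` on non-Hermitian matrices). -/
def hermFun (f : ℝ → ℂ) (A : Matrix ι ι ℂ) : Matrix ι ι ℂ :=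
  if hA : A.IsHermitian then
    (hA.eigenvectorUnitary : Matrix ι ι ℂ) * Matrix.diagonal (fun i => f (hA.eigenvalues i)) *
      (star (hA.eigenvectorUnitary : Matrix ι ι ℂ))
  else 0

/-- Matrix logarithm (on the support; natural logarithm). -/
def matLog (A : Matrix ι ι ℂ) : Matrix ι ι ℂ := hermFun (fun x => (Real.log x : ℂ)) A

/-- Matrix square root of a Hermitian (e.g. positive semidefinite) matrix. -/
def matSqrt (A : Matrix ι ι ℂ) : Matrix ι ι ℂ := hermFun (fun x => (Real.sqrt x : ℂ)) A

/-- Complex matrix power with the Moore–Penrose convention (inverse powers taken on the support). -/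
def matCPow (A : Matrix ι ι ℂ) (z : ℂ) : Matrix ι ι ℂ :=
  hermFun (fun x => if x = 0 then 0 else (x : ℂ) ^ z) A

/-- A state (density operator). -/
def IsState (ρ : Matrix ι ι ℂ) : Prop := ρ.PosSemidef ∧ ρ.trace = 1

/-- Quantum relative entropy `D(ρ‖σ) = tr[ρ (log ρ - log σ)]`. -/
def relEnt (ρ σ : Matrix ι ι ℂ) : ℝ := ((ρ * (matLog ρ - matLog σ)).trace).re

/-- von Neumann entropy `H(ρ) = -tr[ρ log ρ]`. -/
def vnEntropy (ρ : Matrix ι ι ℂ) : ℝ := -((ρ * matLog ρ).trace).re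

/-- Trace norm `‖X‖₁ = tr √(X† X)`. -/
def traceNorm (X : Matrix ι ι ℂ) : ℝ := ((matSqrt (Xᴴ * X)).trace).re

/-- Fidelity `F(ρ,σ) = ‖√ρ √σ‖₁²`. -/
def fidelity (ρ σ : Matrix ι ι ℂ) : ℝ := (traceNorm (matSqrt ρ * matSqrt σ)) ^ 2

variable {A B : Type*} [Fintype A] [DecidableEq A] [Fintype B] [DecidableEq B]

/-- The extension `Λ ⊗ id_m` of a map on matrices. -/
def extendChan (Λ : Matrix A A ℂ →ₗ[ℂ] Matrix B B ℂ) {m : Type*} [Fintype m]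
    (M : Matrix (A × m) (A × m) ℂ) : Matrix (B × m) (B × m) ℂ :=
  fun p q => Λ (fun a a' => M (a, p.2) (a', q.2)) p.1 q.1

/-- A quantum channel: a completely positive trace-preserving linear map. -/
structure IsQChannel (Λ : Matrix A A ℂ →ₗ[ℂ] Matrix B B ℂ) : Prop where
  tp : ∀ M, (Λ M).trace = M.trace
  cp : ∀ (m : ℕ) (M : Matrix (A × Fin m) (A × Fin m) ℂ), M.PosSemidef →
    (extendChan Λ M).PosSemidef

/-- The marginal of a state of `n` systems on the `j`-th system. -/
def marginal {n : ℕ} (ρ : Matrix (Fin n → ι) (Fin n → ι) ℂ) (j : Fin n) :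
    Matrix ι ι ℂ :=
  fun a b => ∑ f : {i : Fin n // i ≠ j} → ι,
      ρ (fun i => if h : i = j then a else f ⟨i, h⟩)
        (fun i => if h : i = j then b else f ⟨i, h⟩)

/-- `n`-fold tensor power of a matrix. -/
def tpow (σ : Matrix ι ι ℂ) (n : ℕ) : Matrix (Fin n → ι) (Fin n → ι) ℂ :=
  fun f g => ∏ i, σ (f i) (g i)

/-- Partial trace over the last `n - k` tensor factors. -/
def ptraceLast {n k : ℕ} (h : k ≤ n) (ρ : Matrix (Fin n → ι) (Fin n → ι) ℂ) :
    Matrix (Fin k → ι) (Fin k → ι) ℂ :=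
  fun a b => ∑ z : Fin (n - k) → ι,
    ρ (fun i => if h' : (i : ℕ) < k then a ⟨i, h'⟩ else z ⟨(i : ℕ) - k, by have := i.isLt; omega⟩)
      (fun i => if h' : (i : ℕ) < k then b ⟨i, h'⟩ else z ⟨(i : ℕ) - k, by have := i.isLt; omega⟩)

/-- Permutation matrix acting on `(ℂ^d)^{⊗ n}`. -/
def permMat (d n : ℕ) (π : Equiv.Perm (Fin n)) :
    Matrix (Fin n → Fin d) (Fin n → Fin d) ℂ :=
  fun f g => if g = f ∘ π then 1 else 0

/-- Orthogonal projection onto the symmetric subspace of `(ℂ^d)^{⊗ n}`. -/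
def symProj (d n : ℕ) : Matrix (Fin n → Fin d) (Fin n → Fin d) ℂ :=
  ((n.factorial : ℂ))⁻¹ • ∑ π : Equiv.Perm (Fin n), permMat d n π

/-- Dimension `d[n] = C(d+n-1, n)` of the symmetric subspace. -/
def dsym (d n : ℕ) : ℕ := (d + n - 1).choose n

/-- Maximally mixed state on the symmetric subspace. -/
def piSym (d n : ℕ) : Matrix (Fin n → Fin d) (Fin n → Fin d) ℂ :=
  ((dsym d n : ℂ))⁻¹ • symProj d n

/-- Tensoring a matrix on the first `k` factors with the identity on the last `n-k` factors. -/
def extendId {d k n : ℕ} (h : k ≤ n) (M : Matrix (Fin k → Fin d) (Fin k → Fin d) ℂ) :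
    Matrix (Fin n → Fin d) (Fin n → Fin d) ℂ :=
  fun f g => (if ∀ i : Fin n, k ≤ (i : ℕ) → f i = g i then 1 else 0) *
    M (fun i => f (Fin.castLE h i)) (fun i => g (Fin.castLE h i))

/-- The universal quantum cloning machine `C_{k→n}`. -/
def uqcm (d : ℕ) {k n : ℕ} (h : k ≤ n) (ω : Matrix (Fin k → Fin d) (Fin k → Fin d) ℂ) :
    Matrix (Fin n → Fin d) (Fin n → Fin d) ℂ :=
  (((dsym d k : ℂ)) / ((dsym d n : ℂ))) •
    (symProj d n * extendId h (symProj d k * ω * symProj d k) * symProj d n)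

/-- The symmetrized partial trace channel `P_{n→k}`. -/
def symPTrace (d : ℕ) {k n : ℕ} (h : k ≤ n) (ω : Matrix (Fin n → Fin d) (Fin n → Fin d) ℂ) :
    Matrix (Fin k → Fin d) (Fin k → Fin d) ℂ :=
  symProj d k * ptraceLast h (symProj d n * ω * symProj d n) * symProj d k

/-- Orthogonal projection onto the antisymmetric subspace of `(ℂ^d)^{⊗ n}`. -/
def antiProj (d n : ℕ) : Matrix (Fin n → Fin d) (Fin n → Fin d) ℂ :=
  ((n.factorial : ℂ))⁻¹ • ∑ π : Equiv.Perm (Fin n), ((Equiv.Perm.sign π : ℤ) : ℂ) • permMat d n π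

/-- Maximally mixed state on the antisymmetric subspace. -/
def piAnti (d n : ℕ) : Matrix (Fin n → Fin d) (Fin n → Fin d) ℂ :=
  ((d.choose n : ℂ))⁻¹ • antiProj d n

/-- The antisymmetric cloning machine. -/
def antiClone (d : ℕ) {k n : ℕ} (h : k ≤ n) (ω : Matrix (Fin k → Fin d) (Fin k → Fin d) ℂ) :
    Matrix (Fin n → Fin d) (Fin n → Fin d) ℂ :=
  (((d.choose k : ℂ)) / ((d.choose n : ℂ))) •
    (antiProj d n * extendId h (antiProj d k * ω * antiProj d k) * antiProj d n)

/-- The antisymmetrized partial trace. -/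
def antiPTrace (d : ℕ) {k n : ℕ} (h : k ≤ n) (ω : Matrix (Fin n → Fin d) (Fin n → Fin d) ℂ) :
    Matrix (Fin k → Fin d) (Fin k → Fin d) ℂ :=
  antiProj d k * ptraceLast h (antiProj d n * ω * antiProj d n) * antiProj d k

/-- Rank-one projection (outer product) `|v⟩⟨v|`. -/
def outer {α : Type*} (v : α → ℂ) : Matrix α α ℂ :=
  fun x y => v x * (starRingEnd ℂ) (v y)

/-- Slater determinant vector `φ₁ ∧ ⋯ ∧ φ_k`. -/
def slater {d k : ℕ} (w : Fin k → (Fin d → ℂ)) : (Fin k → Fin d) → ℂ :=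
  fun f => ((Real.sqrt k.factorial : ℂ))⁻¹ *
    ∑ π : Equiv.Perm (Fin k), ((Equiv.Perm.sign π : ℤ) : ℂ) * ∏ i, w (π i) (f i)

/-- Partial trace over the second tensor factor. -/
def trB {ιA ιB : Type*} [Fintype ιB] (ρ : Matrix (ιA × ιB) (ιA × ιB) ℂ) : Matrix ιA ιA ℂ :=
  fun a a' => ∑ b, ρ (a, b) (a', b)

/-- Partial trace over the first tensor factor. -/
def trA {ιA ιB : Type*} [Fintype ιA] (ρ : Matrix (ιA × ιB) (ιA × ιB) ℂ) : Matrix ιB ιB ℂ :=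
  fun b b' => ∑ a, ρ (a, b) (a, b')

/-- The probability density `β(t) = (π/2)(1 + cosh(π t))⁻¹`. -/
def betaDens (t : ℝ) : ℝ := (Real.pi / 2) * (1 + Real.cosh (Real.pi * t))⁻¹

/-- Rotated Petz recovery map `R^t_{A,X}`, mapping operators on `B` to operators on `A ⊗ B`. -/
def petzA {ιA ιB : Type*} [Fintype ιA] [DecidableEq ιA] [Fintype ιB] [DecidableEq ιB]
    (t : ℝ) (X : Matrix (ιA × ιB) (ιA × ιB) ℂ) (Y : Matrix ιB ιB ℂ) :
    Matrix (ιA × ιB) (ιA × ιB) ℂ :=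
  matCPow X ((1 + t * Complex.I) / 2) *
    ((1 : Matrix ιA ιA ℂ) ⊗ₖ
      (matCPow (trA X) (-(1 + t * Complex.I) / 2) * Y * matCPow (trA X) (-(1 - t * Complex.I) / 2))) *
    matCPow X ((1 - t * Complex.I) / 2)

/-- Rotated Petz recovery map `R^t_{B,X}`, mapping operators on `A` to operators on `A ⊗ B`. -/
def petzB {ιA ιB : Type*} [Fintype ιA] [DecidableEq ιA] [Fintype ιB] [DecidableEq ιB]
    (t : ℝ) (X : Matrix (ιA × ιB) (ιA × ιB) ℂ) (Y : Matrix ιA ιA ℂ) :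
    Matrix (ιA × ιB) (ιA × ιB) ℂ :=
  matCPow X ((1 + t * Complex.I) / 2) *
    ((matCPow (trB X) (-(1 + t * Complex.I) / 2) * Y * matCPow (trB X) (-(1 - t * Complex.I) / 2)) ⊗ₖ
      (1 : Matrix ιB ιB ℂ)) *
    matCPow X ((1 - t * Complex.I) / 2)

/-- Cloning map between two general subspaces, given by their orthogonal projections. -/
def genClone {d k n : ℕ} (h : k ≤ n) (dX dY : ℕ)
    (PX : Matrix (Fin n → Fin d) (Fin n → Fin d) ℂ)
    (PY : Matrix (Fin k → Fin d) (Fin k → Fin d) ℂ)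
    (ω : Matrix (Fin k → Fin d) (Fin k → Fin d) ℂ) :
    Matrix (Fin n → Fin d) (Fin n → Fin d) ℂ :=
  (((dY : ℂ)) / ((dX : ℂ))) • (PX * extendId h (PY * ω * PY) * PX)

/-- Partial trace channel between two general subspaces. -/
def genPTrace {d k n : ℕ} (h : k ≤ n)
    (PX : Matrix (Fin n → Fin d) (Fin n → Fin d) ℂ)
    (PY : Matrix (Fin k → Fin d) (Fin k → Fin d) ℂ)
    (ω : Matrix (Fin n → Fin d) (Fin n → Fin d) ℂ) :
    Matrix (Fin k → Fin d) (Fin k → Fin d) ℂ :=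
  PY * ptraceLast h (PX * ω * PX) * PY

end

/-!
Expanding the Slater determinant and tracing out the last `n - k` factors, orthonormality of
the `φᵢ` gives `ρ = (n! k!)⁻¹ ∑_{π ∈ S_n} |ψ_π⟩⟨ψ_π|`, where `ψ_π` is the unnormalised wedge
of `φ_{π(1)}, …, φ_{π(k)}`. Two such wedges are orthogonal unless `π` and `π'` agree on
`{1, …, k}` up to a permutation `θ` of it, in which case `ψ_{π'} = sgn θ · ψ_π`; counting the
`(n - k)!` permutations with prescribed values on `{1, …, k}` gives `ρ² = C(n,k)⁻¹ ρ`.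
Together with `tr ρ = 1`, `ρ` is `C(n,k)⁻¹` times a projection of rank `C(n,k)`.
-/

open Equiv Finset Matrix

lemma Int.cast_units_mul_self {R : Type*} [Ring R] (u : ℤˣ) : (u : R) * u = 1 := by
  rw [← Int.cast_mul, ← Units.val_mul, Int.units_mul_self, Units.val_one, Int.cast_one]

lemma outer_eq_vecMulVec {γ : Type*} (v : γ → ℂ) : outer v = vecMulVec v (star v) := rfl

lemma Matrix.sum_vecMulVec {γ l n : Type*} (s : Finset γ) (w : γ → l → ℂ) (v : n → ℂ) :
    vecMulVec (∑ c ∈ s, w c) v = ∑ c ∈ s, vecMulVec (w c) v := by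
  ext; simp [vecMulVec_apply, Matrix.sum_apply, Finset.sum_mul]

lemma Matrix.vecMulVec_sum {γ l n : Type*} (s : Finset γ) (w : l → ℂ) (v : γ → n → ℂ) :
    vecMulVec w (∑ c ∈ s, v c) = ∑ c ∈ s, vecMulVec w (v c) := by
  ext; simp [vecMulVec_apply, Matrix.sum_apply, Finset.mul_sum]

lemma isHermitian_outer {γ : Type*} (v : γ → ℂ) : (outer v).IsHermitian := by
  simp [IsHermitian, outer_eq_vecMulVec]

section Spectral

variable {ι : Type*} [Fintype ι] [DecidableEq ι]

lemma Matrix.IsHermitian.eigenvalues_eq_zero_or_eq_of_mul_self_eq_smul {A : Matrix ι ι ℂ}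
    (hA : A.IsHermitian) {c : ℝ} (hsq : A * A = (c : ℂ) • A) (i : ι) :
    hA.eigenvalues i = 0 ∨ hA.eigenvalues i = c := by
  have hv : ⇑(hA.eigenvectorBasis i) ≠ 0 := fun h =>
    hA.eigenvectorBasis.orthonormal.ne_zero i (PiLp.ext (congrFun h))
  have h2 := congrArg (· *ᵥ ⇑(hA.eigenvectorBasis i)) hsq
  simp only [← mulVec_mulVec, smul_mulVec, hA.mulVec_eigenvectorBasis, mulVec_smul,
    RCLike.real_smul_eq_coe_smul (K := ℂ), smul_smul] at h2
  have h3 : ((hA.eigenvalues i * (hA.eigenvalues i - c) : ℝ) : ℂ) = 0 := by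
    rw [← sub_eq_zero, ← sub_smul] at h2
    push_cast
    linear_combination (smul_eq_zero.mp h2).resolve_right hv
  rcases mul_eq_zero.mp (Complex.ofReal_eq_zero.mp h3) with h | h
  · exact Or.inl h
  · exact Or.inr (sub_eq_zero.mp h)

lemma hermFun_eq_smul_of_mul_self_eq_smul {A : Matrix ι ι ℂ} (hA : A.IsHermitian) {c : ℝ}
    (hc : c ≠ 0) (hsq : A * A = (c : ℂ) • A) {f : ℝ → ℂ} (hf : f 0 = 0) :
    hermFun f A = (f c / c) • A := by
  have hdiag : diagonal (fun i => f (hA.eigenvalues i))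
      = (f c / c) • diagonal (RCLike.ofReal ∘ hA.eigenvalues) := by
    rw [← diagonal_smul]
    congr 1
    ext i
    rcases hA.eigenvalues_eq_zero_or_eq_of_mul_self_eq_smul hsq i with h | h <;>
      simp [h, hf, div_mul_cancel₀ _ (Complex.ofReal_ne_zero.mpr hc)]
  conv_rhs => rw [hA.spectral_theorem]
  rw [hermFun, dif_pos hA, hdiag, Matrix.mul_smul, Matrix.smul_mul]
  rfl

lemma vnEntropy_eq_neg_log_of_mul_self_eq_smul {ρ : Matrix ι ι ℂ} (hρ : ρ.IsHermitian) {c : ℝ}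
    (hc : c ≠ 0) (hsq : ρ * ρ = (c : ℂ) • ρ) (htr : ρ.trace = 1) :
    vnEntropy ρ = -Real.log c := by
  rw [vnEntropy, matLog, hermFun_eq_smul_of_mul_self_eq_smul hρ hc hsq (by simp), Matrix.mul_smul,
    hsq, smul_smul, trace_smul, htr, smul_eq_mul, mul_one,
    div_mul_cancel₀ _ (Complex.ofReal_ne_zero.mpr hc), Complex.ofReal_re]

end Spectral

section PermFixing

variable {α β M : Type*} [DecidableEq α] [Fintype β] [AddCommMonoid M]

lemma Equiv.Perm.ofSubtype_permCongr_toEquivRange [DecidableEq β] (ι : β ↪ α) (θ : Perm β) :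
    ofSubtype (ι.toEquivRange.permCongr θ) = θ.viaFintypeEmbedding ι := by
  ext a
  by_cases ha : a ∈ Set.range ι
  · obtain ⟨b, rfl⟩ := ha
    rw [ofSubtype_apply_of_mem _ ⟨b, rfl⟩, viaFintypeEmbedding_apply_image]
    simp [permCongr_apply]
  · rw [ofSubtype_apply_of_not_mem _ ha, viaFintypeEmbedding_apply_notMem_range _ _ ha]

lemma Equiv.Perm.viaFintypeEmbedding_comp [DecidableEq β] (ι : β ↪ α) (π : Perm α)
    (θ : Perm β) :
    ⇑(π * θ.viaFintypeEmbedding ι) ∘ ι = ⇑π ∘ ι ∘ θ := by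
  ext b; simp

variable [Fintype α]

lemma Equiv.Perm.sum_ite_fixes_compl (p : α → Prop) [DecidablePred p] (F : Perm α → M) :
    ∑ t : Perm α, (if ∀ a, ¬p a → t a = a then F t else 0) =
      ∑ s : Perm (Subtype p), F (ofSubtype s) := by
  rw [← Finset.sum_filter, ← Finset.sum_subtype_eq_sum_filter, Finset.subtype_univ]
  exact (Equiv.sum_comp (Perm.subtypeEquivSubtypePerm p) (fun t => F t.1)).symm

lemma Equiv.Perm.sum_ite_fixes_compl_range [DecidableEq β] (ι : β ↪ α) (F : Perm α → M) :
    ∑ t : Perm α, (if ∀ a, (∀ b, ι b ≠ a) → t a = a then F t else 0) =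
      ∑ θ : Perm β, F (θ.viaFintypeEmbedding ι) := by
  classical
  have := sum_ite_fixes_compl (· ∈ Set.range ι) F
  simp only [Set.mem_range, not_exists] at this
  rw [this]
  refine Finset.sum_equiv ι.toEquivRange.permCongr.symm (by simp) fun s _ => ?_
  rw [← ofSubtype_permCongr_toEquivRange, Equiv.apply_symm_apply]

lemma Equiv.Perm.card_filter_comp_eq (ι : β ↪ α) (σ₀ : Perm α) :
    #{σ : Perm α | ⇑σ ∘ ι = ⇑σ₀ ∘ ι} = (Fintype.card α - Fintype.card β).factorial := by
  classical
  have hfix : #{t : Perm α | ∀ b, t (ι b) = ι b} =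
      (Fintype.card α - Fintype.card β).factorial := by
    have := sum_ite_fixes_compl (· ∉ Set.range ι) (fun _ => 1)
    simp only [not_not, Set.forall_mem_range, Finset.sum_const, smul_eq_mul, mul_one,
      Finset.card_univ, Fintype.card_perm, Fintype.card_subtype_compl,
      Set.card_range_of_injective ι.injective] at this
    rw [Finset.card_eq_sum_ones, Finset.sum_filter, ← this]
  rw [← hfix]
  refine Finset.card_bij' (fun σ _ => σ₀⁻¹ * σ) (fun t _ => σ₀ * t) ?_ ?_ ?_ ?_
  · intro σ hσ
    simp only [Finset.mem_filter, Finset.mem_univ, true_and, funext_iff,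
      Function.comp_apply] at hσ ⊢
    intro b
    simp [hσ]
  · intro t ht
    simp only [Finset.mem_filter, Finset.mem_univ, true_and, funext_iff,
      Function.comp_apply] at ht ⊢
    intro b
    rw [Perm.mul_apply, ht]
  · intro σ _; simp
  · intro t _; simp

end PermFixing

section Wedge

variable {β m : Type*} [Fintype β] [DecidableEq β]

def tensorVec (u : β → m → ℂ) : (β → m) → ℂ := fun x => ∏ i, u i (x i)

def wedge (ψ : β → m → ℂ) : (β → m) → ℂ :=
  ∑ τ : Perm β, (Perm.sign τ : ℂ) • tensorVec (ψ ∘ τ)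

lemma wedge_comp_perm (ψ : β → m → ℂ) (θ : Perm β) :
    wedge (ψ ∘ θ) = (Perm.sign θ : ℂ) • wedge ψ := by
  rw [wedge, wedge, Finset.smul_sum]
  conv_rhs => rw [← Equiv.sum_comp (Equiv.mulLeft θ)]
  refine Finset.sum_congr rfl fun τ _ => ?_
  rw [smul_smul, Equiv.coe_mulLeft, Perm.sign_mul, Units.val_mul, Int.cast_mul, ← mul_assoc,
    Int.cast_units_mul_self, one_mul]
  rfl

lemma outer_wedge [Fintype m] (ψ : β → m → ℂ) :
    outer (wedge ψ) = ∑ π : Perm β, ∑ σ : Perm β,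
      (Perm.sign π * Perm.sign σ : ℂ) • vecMulVec (tensorVec (ψ ∘ π)) (star (tensorVec (ψ ∘ σ))) := by
  simp only [outer_eq_vecMulVec, wedge, star_sum, star_smul, Matrix.sum_vecMulVec,
    Matrix.vecMulVec_sum, smul_vecMulVec, vecMulVec_smul, Complex.star_def, map_intCast, smul_sum,
    smul_smul]
  rw [sum_comm]
  simp only [mul_comm]

variable [Fintype m]

lemma dotProduct_tensorVec (u v : β → m → ℂ) :
    star (tensorVec u) ⬝ᵥ tensorVec v = ∏ i, star (u i) ⬝ᵥ v i := by
  simp only [dotProduct, tensorVec, Pi.star_apply, star_prod, Fintype.prod_sum,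
    ← Finset.prod_mul_distrib]

variable {ι : Type*} [DecidableEq ι] {φ : ι → m → ℂ}

lemma dotProduct_tensorVec_comp (hφ : ∀ i j, star (φ i) ⬝ᵥ φ j = if i = j then 1 else 0)
    (u v : β → ι) :
    star (tensorVec (φ ∘ u)) ⬝ᵥ tensorVec (φ ∘ v) = if u = v then 1 else 0 := by
  simp only [dotProduct_tensorVec, Function.comp_apply, hφ, Finset.prod_boole, funext_iff,
    Finset.mem_univ, true_implies]

lemma dotProduct_wedge_comp (hφ : ∀ i j, star (φ i) ⬝ᵥ φ j = if i = j then 1 else 0)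
    (u v : β → ι) :
    star (wedge (φ ∘ u)) ⬝ᵥ wedge (φ ∘ v) =
      (Fintype.card β).factorial * ∑ θ : Perm β, (Perm.sign θ : ℂ) * if u = v ∘ θ then 1 else 0 := by
  have hpair : ∀ τ τ' : Perm β, star ((Perm.sign τ : ℂ) • tensorVec ((φ ∘ u) ∘ τ)) ⬝ᵥ
      ((Perm.sign τ' : ℂ) • tensorVec ((φ ∘ v) ∘ τ')) =
        Perm.sign τ * Perm.sign τ' * if u ∘ τ = v ∘ τ' then 1 else 0 := by
    intro τ τ'
    rw [star_smul, smul_dotProduct, dotProduct_smul, Function.comp_assoc, Function.comp_assoc,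
      dotProduct_tensorVec_comp hφ]
    simp
  have hshift : ∀ τ θ : Perm β, (Perm.sign τ * Perm.sign (θ * τ) : ℂ) *
      (if u ∘ τ = v ∘ ⇑(θ * τ) then 1 else 0) = Perm.sign θ * if u = v ∘ θ then 1 else 0 := by
    intro τ θ
    rw [Perm.sign_mul, Units.val_mul, Int.cast_mul, mul_left_comm, Int.cast_units_mul_self,
      mul_one, Perm.coe_mul, ← Function.comp_assoc]
    simp only [τ.surjective.injective_comp_right.eq_iff]
  calc star (wedge (φ ∘ u)) ⬝ᵥ wedge (φ ∘ v)
      = ∑ τ : Perm β, ∑ τ' : Perm β,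
          (Perm.sign τ * Perm.sign τ' : ℂ) * if u ∘ τ = v ∘ τ' then 1 else 0 := by
        simp only [wedge, star_sum, sum_dotProduct, dotProduct_sum, hpair]
        exact Finset.sum_comm
    _ = ∑ _τ : Perm β, ∑ θ : Perm β, (Perm.sign θ : ℂ) * if u = v ∘ θ then 1 else 0 := by
        refine Finset.sum_congr rfl fun τ _ => ?_
        rw [← Equiv.sum_comp (Equiv.mulRight τ)]
        exact Finset.sum_congr rfl fun θ _ => hshift τ θ
    _ = _ := by rw [sum_const, card_univ, Fintype.card_perm, nsmul_eq_mul]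

lemma dotProduct_wedge_comp_self (hφ : ∀ i j, star (φ i) ⬝ᵥ φ j = if i = j then 1 else 0)
    {u : β → ι} (hu : Function.Injective u) :
    star (wedge (φ ∘ u)) ⬝ᵥ wedge (φ ∘ u) = (Fintype.card β).factorial := by
  have hfix : ∀ θ : Perm β, u = u ∘ θ ↔ θ = 1 := fun θ =>
    ⟨fun h => Perm.ext fun b => (hu (congrFun h b)).symm, fun h => h ▸ rfl⟩
  simp [dotProduct_wedge_comp hφ, hfix]

end Wedge

section WedgeOuterSum

variable {α β m : Type*} [Fintype α] [DecidableEq α] [Fintype β] [DecidableEq β]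

def wedgeOuterSum (φ : α → m → ℂ) (ι : β ↪ α) : Matrix (β → m) (β → m) ℂ :=
  ∑ π : Perm α, outer (wedge (φ ∘ π ∘ ι))

lemma isHermitian_wedgeOuterSum (φ : α → m → ℂ) (ι : β ↪ α) :
    (wedgeOuterSum φ ι).IsHermitian :=
  isSelfAdjoint_sum _ fun _ _ => isHermitian_outer _

variable [Fintype m]

lemma sum_vecMulVec_tensorVec_star_wedge (φ : α → m → ℂ) (ι : β ↪ α) :
    ∑ π : Perm α, vecMulVec (tensorVec (φ ∘ π ∘ ι)) (star (wedge (φ ∘ π ∘ ι))) =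
      ((Fintype.card β).factorial : ℂ)⁻¹ • wedgeOuterSum φ ι := by
  rw [eq_inv_smul_iff₀ (by positivity)]
  calc ((Fintype.card β).factorial : ℂ) • ∑ π : Perm α,
        vecMulVec (tensorVec (φ ∘ π ∘ ι)) (star (wedge (φ ∘ π ∘ ι)))
      = ∑ θ : Perm β, ∑ π : Perm α,
          vecMulVec (tensorVec (φ ∘ π ∘ ι ∘ θ)) (star (wedge (φ ∘ π ∘ ι ∘ θ))) := by
        rw [← Fintype.card_perm, Nat.cast_smul_eq_nsmul, ← card_univ, ← sum_const]
        refine sum_congr rfl fun θ _ => ?_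
        rw [← Equiv.sum_comp (Equiv.mulRight (θ.viaFintypeEmbedding ι))]
        simp only [Equiv.coe_mulRight, ← Function.comp_assoc, Perm.viaFintypeEmbedding_comp]
    _ = wedgeOuterSum φ ι := by
        rw [sum_comm]
        refine sum_congr rfl fun π _ => ?_
        simp only [show ∀ θ : Perm β, φ ∘ π ∘ ι ∘ θ = (φ ∘ π ∘ ι) ∘ θ from fun _ => rfl,
          wedge_comp_perm, star_smul, vecMulVec_smul]
        simp only [Complex.star_def, map_intCast, ← smul_vecMulVec, ← Matrix.sum_vecMulVec]
        rfl

variable {φ : α → m → ℂ}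

lemma trace_wedgeOuterSum (hφ : ∀ i j, star (φ i) ⬝ᵥ φ j = if i = j then 1 else 0) (ι : β ↪ α) :
    (wedgeOuterSum φ ι).trace = (Fintype.card α).factorial * (Fintype.card β).factorial := by
  calc (wedgeOuterSum φ ι).trace
      = ∑ π : Perm α, star (wedge (φ ∘ π ∘ ι)) ⬝ᵥ wedge (φ ∘ π ∘ ι) := by
        simp only [wedgeOuterSum, trace_sum, outer_eq_vecMulVec, trace_vecMulVec, dotProduct_comm]
    _ = ∑ _π : Perm α, ((Fintype.card β).factorial : ℂ) :=
        sum_congr rfl fun π _ => dotProduct_wedge_comp_self hφ (π.injective.comp ι.injective)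
    _ = _ := by simp [Fintype.card_perm]

lemma wedgeOuterSum_mulVec_wedge (hφ : ∀ i j, star (φ i) ⬝ᵥ φ j = if i = j then 1 else 0)
    (ι : β ↪ α) (π : Perm α) :
    wedgeOuterSum φ ι *ᵥ wedge (φ ∘ π ∘ ι) =
      ((Fintype.card β).factorial * (Fintype.card β).factorial *
        (Fintype.card α - Fintype.card β).factorial : ℂ) • wedge (φ ∘ π ∘ ι) := by
  set w := wedge (φ ∘ π ∘ ι)
  have hterm : ∀ (π' : Perm α) (θ : Perm β), ((Perm.sign θ : ℂ) *
      if ⇑π' ∘ ι = ⇑π ∘ ι ∘ θ then 1 else 0) • wedge (φ ∘ π' ∘ ι) =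
        (if ⇑π' ∘ ι = ⇑π ∘ ι ∘ θ then 1 else 0 : ℂ) • w := by
    intro π' θ
    split_ifs with h
    · rw [mul_one, h, show φ ∘ ⇑π ∘ ⇑ι ∘ ⇑θ = (φ ∘ ⇑π ∘ ⇑ι) ∘ ⇑θ from rfl, wedge_comp_perm,
        smul_smul, Int.cast_units_mul_self, one_smul]
    · simp
  calc wedgeOuterSum φ ι *ᵥ w
      = ∑ π' : Perm α, (star (wedge (φ ∘ π' ∘ ι)) ⬝ᵥ w) • wedge (φ ∘ π' ∘ ι) := by
        simp only [wedgeOuterSum, sum_mulVec, outer_eq_vecMulVec, vecMulVec_mulVec,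
          op_smul_eq_smul]
    _ = ∑ π' : Perm α, ∑ θ : Perm β, ((Fintype.card β).factorial : ℂ) •
          (if ⇑π' ∘ ι = ⇑π ∘ ι ∘ θ then 1 else 0 : ℂ) • w := by
        refine sum_congr rfl fun π' _ => ?_
        rw [dotProduct_wedge_comp hφ, mul_smul, sum_smul, smul_sum]
        simp only [Function.comp_assoc, hterm]
    _ = ∑ _θ : Perm β, ((Fintype.card β).factorial : ℂ) •
          ((Fintype.card α - Fintype.card β).factorial : ℂ) • w := by
        rw [sum_comm]
        refine sum_congr rfl fun θ _ => ?_
        rw [← smul_sum, ← sum_smul, sum_boole, ← Perm.viaFintypeEmbedding_comp, Perm.card_filter_comp_eq]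
    _ = _ := by
        rw [sum_const, card_univ, Fintype.card_perm, ← Nat.cast_smul_eq_nsmul ℂ, smul_smul,
          smul_smul, mul_assoc]

lemma wedgeOuterSum_mul_self (hφ : ∀ i j, star (φ i) ⬝ᵥ φ j = if i = j then 1 else 0)
    (ι : β ↪ α) :
    wedgeOuterSum φ ι * wedgeOuterSum φ ι =
      ((Fintype.card β).factorial * (Fintype.card β).factorial *
        (Fintype.card α - Fintype.card β).factorial : ℂ) • wedgeOuterSum φ ι := by
  nth_rewrite 2 [wedgeOuterSum]
  simp only [Matrix.mul_sum, outer_eq_vecMulVec, mul_vecMulVec, wedgeOuterSum_mulVec_wedge hφ,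
    smul_vecMulVec, ← smul_sum]
  rfl

end WedgeOuterSum

section PartialTrace

variable {m : Type*} {n k : ℕ} (h : k ≤ n)

def finSplit : Fin k ⊕ Fin (n - k) ≃ Fin n :=
  finSumFinEquiv.trans (finCongr (Nat.add_sub_cancel' h))

lemma finSplit_inl (i : Fin k) : finSplit h (Sum.inl i) = Fin.castLE h i := rfl

lemma finSplit_inr_val (j : Fin (n - k)) : (finSplit h (Sum.inr j) : ℕ) = k + j := rfl

lemma tensorVec_sumElim_comp_finSplit_symm (u : Fin n → m → ℂ) (a : Fin k → m)
    (z : Fin (n - k) → m) :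
    tensorVec u (Sum.elim a z ∘ (finSplit h).symm) =
      tensorVec (u ∘ Fin.castLE h) a * tensorVec (u ∘ finSplit h ∘ Sum.inr) z := by
  simp only [tensorVec, ← (finSplit h).prod_comp, Function.comp_apply, Equiv.symm_apply_apply,
    Fintype.prod_sum_type, Sum.elim_inl, Sum.elim_inr, finSplit_inl]

lemma Equiv.Perm.comp_finSplit_inr_eq_iff (t : Perm (Fin n)) :
    ⇑t ∘ finSplit h ∘ Sum.inr = finSplit h ∘ Sum.inr ↔
      ∀ a, (∀ b, Fin.castLEEmb h b ≠ a) → t a = a := by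
  constructor
  · intro ht a ha
    obtain ⟨x, rfl⟩ := (finSplit h).surjective a
    rcases x with i | j
    · exact absurd (finSplit_inl h i).symm (ha i)
    · exact congrFun ht j
  · intro ht
    funext j
    refine ht _ fun b hb => ?_
    rw [Fin.coe_castLEEmb, ← finSplit_inl h, Function.comp_apply,
      (finSplit h).injective.eq_iff] at hb
    exact Sum.inl_ne_inr hb

variable [Fintype m]

lemma ptraceLast_apply (M : Matrix (Fin n → m) (Fin n → m) ℂ) (a b : Fin k → m) :
    ptraceLast h M a b =
      ∑ z, M (Sum.elim a z ∘ (finSplit h).symm) (Sum.elim b z ∘ (finSplit h).symm) := by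
  have hglue : ∀ (x : Fin k → m) (z : Fin (n - k) → m),
      (fun i : Fin n => if h' : (i : ℕ) < k then x ⟨i, h'⟩ else z ⟨i - k, by omega⟩) =
        Sum.elim x z ∘ (finSplit h).symm := by
    intro x z
    funext i
    by_cases hi : (i : ℕ) < k
    · rw [dif_pos hi, Function.comp_apply,
        (finSplit h).symm_apply_eq.mpr (Fin.ext rfl : i = finSplit h (Sum.inl ⟨i, hi⟩))]
      rfl
    · have hj : (i : ℕ) - k < n - k := by omega
      rw [dif_neg hi, Function.comp_apply, (finSplit h).symm_apply_eq.mpr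
        (Fin.ext (by rw [finSplit_inr_val]; exact (Nat.add_sub_cancel' (not_lt.mp hi)).symm) :
          i = finSplit h (Sum.inr ⟨i - k, hj⟩))]
      rfl
  simp only [ptraceLast, hglue]

lemma ptraceLast_sum {γ : Type*} (s : Finset γ) (M : γ → Matrix (Fin n → m) (Fin n → m) ℂ) :
    ptraceLast h (∑ c ∈ s, M c) = ∑ c ∈ s, ptraceLast h (M c) := by
  ext a b
  simp only [ptraceLast_apply, Matrix.sum_apply]
  exact Finset.sum_comm

lemma ptraceLast_smul (c : ℂ) (M : Matrix (Fin n → m) (Fin n → m) ℂ) :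
    ptraceLast h (c • M) = c • ptraceLast h M := by
  ext a b
  simp only [ptraceLast_apply, Matrix.smul_apply, smul_eq_mul, Finset.mul_sum]

lemma ptraceLast_vecMulVec_tensorVec (u v : Fin n → m → ℂ) :
    ptraceLast h (vecMulVec (tensorVec u) (star (tensorVec v))) =
      (star (tensorVec (v ∘ finSplit h ∘ Sum.inr)) ⬝ᵥ tensorVec (u ∘ finSplit h ∘ Sum.inr)) •
        vecMulVec (tensorVec (u ∘ Fin.castLE h)) (star (tensorVec (v ∘ Fin.castLE h))) := by
  ext a b
  simp only [ptraceLast_apply, vecMulVec_apply, Pi.star_apply,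
    tensorVec_sumElim_comp_finSplit_symm, Matrix.smul_apply, smul_eq_mul, dotProduct,
    Finset.sum_mul, star_mul']
  refine sum_congr rfl fun z _ => ?_
  ring

end PartialTrace

section SlaterMarginal

lemma slater_eq_smul_wedge {d k : ℕ} (w : Fin k → Fin d → ℂ) :
    slater w = ((Real.sqrt k.factorial : ℝ) : ℂ)⁻¹ • wedge w := by
  ext f
  simp [slater, wedge, tensorVec, Finset.sum_apply]

lemma outer_slater {d k : ℕ} (w : Fin k → Fin d → ℂ) :
    outer (slater w) = ((k.factorial : ℂ))⁻¹ • outer (wedge w) := by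
  rw [slater_eq_smul_wedge, outer_eq_vecMulVec, outer_eq_vecMulVec, star_smul, smul_vecMulVec,
    vecMulVec_smul, smul_smul, Complex.star_def, map_inv₀, Complex.conj_ofReal, ← mul_inv,
    ← Complex.ofReal_mul, Real.mul_self_sqrt (Nat.cast_nonneg _), Complex.ofReal_natCast]

variable {d n k : ℕ} {φ : Fin n → Fin d → ℂ}

lemma ptraceLast_outer_slater_eq_sum (hφ : ∀ i j, star (φ i) ⬝ᵥ φ j = if i = j then 1 else 0)
    (h : k ≤ n) :
    ptraceLast h (outer (slater φ)) = ((n.factorial : ℂ))⁻¹ • ∑ π : Perm (Fin n),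
      vecMulVec (tensorVec (φ ∘ π ∘ Fin.castLEEmb h)) (star (wedge (φ ∘ π ∘ Fin.castLEEmb h))) := by
  rw [outer_slater, ptraceLast_smul, outer_wedge, ptraceLast_sum]
  congr 1
  refine sum_congr rfl fun π _ => ?_
  set ι := Fin.castLEEmb h
  set F : Perm (Fin n) → Matrix (Fin k → Fin d) (Fin k → Fin d) ℂ := fun t =>
    (Perm.sign t : ℂ) • vecMulVec (tensorVec (φ ∘ π ∘ ι)) (star (tensorVec (φ ∘ ⇑(π * t) ∘ ι)))
  calc ptraceLast h (∑ σ : Perm (Fin n), (Perm.sign π * Perm.sign σ : ℂ) •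
        vecMulVec (tensorVec (φ ∘ π)) (star (tensorVec (φ ∘ σ))))
      = ∑ t : Perm (Fin n), if ∀ a, (∀ b, ι b ≠ a) → t a = a then F t else 0 := by
        rw [ptraceLast_sum, ← Equiv.sum_comp (Equiv.mulLeft π)]
        refine sum_congr rfl fun t _ => ?_
        simp only [ptraceLast_smul, ptraceLast_vecMulVec_tensorVec, Function.comp_assoc,
          dotProduct_tensorVec_comp hφ]
        have hcond : ⇑π ∘ ⇑t ∘ finSplit h ∘ Sum.inr = ⇑π ∘ finSplit h ∘ Sum.inr ↔
            ∀ a, (∀ b, ι b ≠ a) → t a = a := by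
          rw [π.injective.comp_left.eq_iff, Perm.comp_finSplit_inr_eq_iff]
        simp only [Equiv.coe_mulLeft, Perm.coe_mul, Function.comp_assoc, hcond]
        split_ifs
        · rw [one_smul, Perm.sign_mul, Units.val_mul, Int.cast_mul, ← mul_assoc,
            Int.cast_units_mul_self, one_mul]
          rfl
        · rw [zero_smul, smul_zero]
    _ = ∑ θ : Perm (Fin k), F (θ.viaFintypeEmbedding ι) := by
        convert Perm.sum_ite_fixes_compl_range ι F
    _ = _ := by
        simp only [F, Perm.viaFintypeEmbedding_comp, Perm.viaFintypeEmbedding_sign, wedge,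
          star_sum, star_smul, Matrix.vecMulVec_sum, vecMulVec_smul, Complex.star_def, map_intCast]
        rfl

lemma ptraceLast_outer_slater (hφ : ∀ i j, star (φ i) ⬝ᵥ φ j = if i = j then 1 else 0)
    (h : k ≤ n) :
    ptraceLast h (outer (slater φ)) =
      ((n.factorial * k.factorial : ℕ) : ℂ)⁻¹ • wedgeOuterSum φ (Fin.castLEEmb h) := by
  rw [ptraceLast_outer_slater_eq_sum hφ h, sum_vecMulVec_tensorVec_star_wedge, smul_smul,
    Fintype.card_fin, ← mul_inv, Nat.cast_mul]

end SlaterMarginal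

theorem entropy_ptrace_slater_general
    (d k n : ℕ) (hkn : k ≤ n)
    (φ : Fin n → (Fin d → ℂ))
    (hφ : ∀ i j, (∑ a, (starRingEnd ℂ) (φ i a) * φ j a) = if i = j then 1 else 0) :
    vnEntropy (ptraceLast hkn (outer (slater φ))) = Real.log (n.choose k) := by
  have hρ := ptraceLast_outer_slater hφ hkn
  have hchoose : (n.choose k * k.factorial * (n - k).factorial : ℂ) = n.factorial := by
    exact_mod_cast Nat.choose_mul_factorial_mul_factorial hkn
  have hsq : ptraceLast hkn (outer (slater φ)) * ptraceLast hkn (outer (slater φ)) =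
      (((n.choose k : ℝ)⁻¹ : ℝ) : ℂ) • ptraceLast hkn (outer (slater φ)) := by
    rw [hρ, smul_mul_smul_comm, wedgeOuterSum_mul_self hφ, smul_smul, smul_smul,
      Fintype.card_fin, Fintype.card_fin]
    congr 1
    rw [Nat.cast_mul, ← hchoose]
    push_cast
    field_simp
  have htr : (ptraceLast hkn (outer (slater φ))).trace = 1 := by
    rw [hρ, trace_smul, trace_wedgeOuterSum hφ, Fintype.card_fin, Fintype.card_fin, smul_eq_mul,
      Nat.cast_mul, inv_mul_cancel₀ (by positivity)]
  have hherm : (ptraceLast hkn (outer (slater φ))).IsHermitian :=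
    hρ ▸ (isHermitian_wedgeOuterSum φ _).smul (by simp [IsSelfAdjoint])
  have hc : ((n.choose k : ℝ))⁻¹ ≠ 0 := inv_ne_zero (Nat.cast_ne_zero.mpr (Nat.choose_pos hkn).ne')
  rw [vnEntropy_eq_neg_log_of_mul_self_eq_smul hherm hc hsq htr, Real.log_inv, neg_neg]

/-- The quantum entropy of the `k`-particle marginal of a Slater determinant of `n`
orthonormal vectors is `log C(n,k)`. -/
theorem entropy_ptrace_slater
    (d k n : ℕ) (hk : 1 ≤ k) (hkn : k ≤ n) (hnd : n ≤ d)
    (φ : Fin n → (Fin d → ℂ))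
    (hφ : ∀ i j, (∑ a, (starRingEnd ℂ) (φ i a) * φ j a) = if i = j then 1 else 0) :
    vnEntropy (ptraceLast hkn (outer (slater φ))) = Real.log (n.choose k) :=
  entropy_ptrace_slater_general d k n hkn φ hφ
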